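/- arXiv:1101.3110 — 8 statements merged into one kernel-verified Lean document; each statement's English description precedes it below -/
import Mathlib

section
/- For any real numbers $0 \le x \le 1$ and $\kappa > 0$, we have $(1-x)^{\kappa} \ge e^{-\kappa x} - \frac{1}{e\kappa}$. -/
/-!
The gap `g(y) = exp (-(κ y)) - (1 - y) ^ κ` is continuous on `[0, 1]`, so it attains its maximum
there. At `y = 0`, at `y = 1`, and at every interior critical point (where
`(1 - y) ^ (κ - 1) = exp (-(κ y))`) one has `g(y) = y exp (-(κ y))`, and
`t exp (-t) ≤ exp (-1)` with `t = κ y` bounds this by `1 / (e κ)`.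
-/

open Real Set

theorem ContinuousOn.forall_le_of_critical_le {f f' : ℝ → ℝ} {a b M : ℝ} (hab : a ≤ b)
    (hf : ContinuousOn f (Icc a b)) (hf' : ∀ c ∈ Ioo a b, HasDerivAt f (f' c) c)
    (ha : f a ≤ M) (hb : f b ≤ M) (hcrit : ∀ c ∈ Ioo a b, f' c = 0 → f c ≤ M) :
    ∀ x ∈ Icc a b, f x ≤ M := by
  obtain ⟨c, hc, hmax⟩ := isCompact_Icc.exists_isMaxOn (nonempty_Icc.mpr hab) hf
  suffices f c ≤ M from fun x hx => (hmax hx).trans this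
  rcases hc.1.eq_or_lt with rfl | hac
  · exact ha
  rcases hc.2.eq_or_lt with rfl | hcb
  · exact hb
  have hloc : IsLocalMax f c := hmax.isLocalMax (Icc_mem_nhds hac hcb)
  exact hcrit c ⟨hac, hcb⟩ (hloc.hasDerivAt_eq_zero (hf' c ⟨hac, hcb⟩))

theorem mul_exp_neg_mul_le {κ : ℝ} (hκ : 0 < κ) (y : ℝ) :
    y * exp (-(κ * y)) ≤ 1 / (exp 1 * κ) := by
  calc y * exp (-(κ * y)) = κ * y * exp (-(κ * y)) / κ := by field_simp
    _ ≤ exp (-1) / κ := by gcongr; exact mul_exp_neg_le_exp_neg_one _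
    _ = 1 / (exp 1 * κ) := by rw [exp_neg, inv_div_left, one_div, mul_comm]

theorem hasDerivAt_exp_neg_mul_sub_one_sub_rpow (κ : ℝ) {y : ℝ} (hy : y < 1) :
    HasDerivAt (fun y => exp (-(κ * y)) - (1 - y) ^ κ)
      (κ * ((1 - y) ^ (κ - 1) - exp (-(κ * y)))) y := by
  have hexp : HasDerivAt (fun y => exp (-(κ * y))) (exp (-(κ * y)) * -κ) y := by
    simpa using ((hasDerivAt_id y).const_mul κ).neg.exp
  have hrpow : HasDerivAt (fun y => (1 - y) ^ κ) (-(κ * (1 - y) ^ (κ - 1))) y := by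
    simpa using ((hasDerivAt_id y).const_sub 1).rpow_const (p := κ) (Or.inl (sub_pos.2 hy).ne')
  exact (hexp.sub hrpow).congr_deriv (by ring)

theorem exp_neg_mul_sub_one_sub_rpow_of_rpow_sub_one_eq {κ y : ℝ} (hy : y < 1)
    (hpow : (1 - y) ^ (κ - 1) = exp (-(κ * y))) :
    exp (-(κ * y)) - (1 - y) ^ κ = y * exp (-(κ * y)) := by
  have hsplit : (1 - y) ^ κ = (1 - y) ^ (κ - 1) * (1 - y) := by
    rw [← rpow_add_one (sub_pos.2 hy).ne', sub_add_cancel]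
  rw [hsplit, hpow]
  ring

theorem stmt0 (x κ : ℝ) (hx0 : 0 ≤ x) (hx1 : x ≤ 1) (hκ : 0 < κ) :
    (1 - x) ^ κ ≥ Real.exp (-(κ * x)) - 1 / (Real.exp 1 * κ) := by
  have hcont : Continuous fun y : ℝ => exp (-(κ * y)) - (1 - y) ^ κ :=
    (by fun_prop : Continuous fun y : ℝ => exp (-(κ * y))).sub
      ((continuous_const.sub continuous_id).rpow_const fun _ => Or.inr hκ.le)
  have hgap := hcont.continuousOn.forall_le_of_critical_le (M := 1 / (exp 1 * κ)) zero_le_one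
    (fun c hc => hasDerivAt_exp_neg_mul_sub_one_sub_rpow κ hc.2)
    (by simpa using mul_exp_neg_mul_le hκ 0)
    (by simpa [zero_rpow hκ.ne'] using mul_exp_neg_mul_le hκ 1)
    (fun c hc hcrit => by
      have hpow : (1 - c) ^ (κ - 1) = exp (-(κ * c)) :=
        sub_eq_zero.1 ((mul_eq_zero.1 hcrit).resolve_left hκ.ne')
      rw [exp_neg_mul_sub_one_sub_rpow_of_rpow_sub_one_eq hc.2 hpow]
      exact mul_exp_neg_mul_le hκ c)
    x ⟨hx0, hx1⟩
  linarith
end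

section
/- Let $w_1,\dots,w_\kappa$ be nonnegative reals summing to $1$ and let $G(s) = \frac{1}{\kappa}\sum_i e^{-w_i\kappa s}$. Then for every $s > 0$, $G(s) - G(2s) \le \sqrt{G(2s) - G(4s)}$. -/
/-!
With `x i = exp (-(w i * κ * s)) ∈ (0, 1]` we have `G (n * s) = mean (x ^ n)`, so the claim reads
`mean (x - x²) ≤ √(mean (x² - x⁴))`. By Cauchy–Schwarz `mean (x - x²)² ≤ mean ((x - x²)²)`, and
pointwise `(x - x²)² ≤ x² - x⁴` on `[0, 1]` because `(1 - x)² ≤ 1 - x² = (1 - x)(1 + x)`.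
-/

open Finset Real

lemma sq_sub_sq_le_sq_sub_pow_four {x : ℝ} (hx₀ : 0 ≤ x) (hx₁ : x ≤ 1) :
    (x - x ^ 2) ^ 2 ≤ x ^ 2 - x ^ 4 := by
  nlinarith [mul_nonneg (pow_nonneg hx₀ 3) (sub_nonneg.2 hx₁)]

lemma sq_sum_sub_sq_div_card_le {ι : Type*} (t : Finset ι) {x : ι → ℝ}
    (hx : ∀ i ∈ t, 0 ≤ x i ∧ x i ≤ 1) :
    ((∑ i ∈ t, (x i - x i ^ 2)) / #t) ^ 2 ≤ (∑ i ∈ t, (x i ^ 2 - x i ^ 4)) / #t :=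
  sum_div_card_sq_le_sum_sq_div_card.trans <| div_le_div_of_nonneg_right
    (sum_le_sum fun i hi => sq_sub_sq_le_sq_sub_pow_four (hx i hi).1 (hx i hi).2) (Nat.cast_nonneg _)

theorem stmt5_general (κ : ℕ) (w : Fin κ → ℝ) (hw : ∀ i, 0 ≤ w i)
    (G : ℝ → ℝ)
    (hG : ∀ s, G s = (1 / κ) * ∑ i, Real.exp (-(w i * κ * s))) :
    ∀ s : ℝ, 0 < s → G s - G (2 * s) ≤ Real.sqrt (G (2 * s) - G (4 * s)) := by
  intro s hs
  set x : Fin κ → ℝ := fun i => exp (-(w i * κ * s))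
  have hx : ∀ i ∈ univ, 0 ≤ x i ∧ x i ≤ 1 := fun i _ =>
    ⟨(exp_pos _).le, exp_le_one_iff.2 (by have := hw i; simp only [neg_nonpos]; positivity)⟩
  have hG_pow (n : ℕ) : G (n * s) = (∑ i, x i ^ n) / κ := by
    simp only [hG, x, ← exp_nat_mul, one_div_mul_eq_div]
    congr! 3
    ring
  have hG₁ : G s = (∑ i, x i) / κ := by simpa using hG_pow 1
  have hG₂ : G (2 * s) = (∑ i, x i ^ 2) / κ := by exact_mod_cast hG_pow 2
  have hG₄ : G (4 * s) = (∑ i, x i ^ 4) / κ := by exact_mod_cast hG_pow 4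
  have key := sq_sum_sub_sq_div_card_le univ hx
  rw [card_univ, Fintype.card_fin, sum_sub_distrib, sum_sub_distrib, sub_div, sub_div,
    ← hG₁, ← hG₂, ← hG₄] at key
  exact (le_abs_self _).trans (abs_le_sqrt key)

theorem stmt5 (κ : ℕ) (hκ : 0 < κ) (w : Fin κ → ℝ) (hw : ∀ i, 0 ≤ w i)
    (hsum : ∑ i, w i = 1) (G : ℝ → ℝ)
    (hG : ∀ s, G s = (1 / κ) * ∑ i, Real.exp (-(w i * κ * s))) :
    ∀ s : ℝ, 0 < s → G s - G (2 * s) ≤ Real.sqrt (G (2 * s) - G (4 * s)) :=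
  stmt5_general κ w hw G hG
end

section
/- Let $w_1,\dots,w_\kappa$ be nonnegative reals summing to $1$, let $G(s) = \frac{1}{\kappa}\sum_i e^{-w_i\kappa s}$, and let $\epsilon = 1 - G(1/2)$. If $\epsilon > 0$ then $G(1/2) - G(1) \ge \epsilon^{5/\epsilon}$. -/
/-!
Write `b i = exp (-(w i * κ / 2))`, so that `G (1 / 2) - G 1` is the mean of `b i * (1 - b i)`
and `ε` is the mean of `1 - b i ≤ w i * κ / 2`, whence `ε ≤ 1 / 2`. By Markov's inequality at most
`κ * ε / 2` indices have `w i * κ > 2 / ε`; since `1 - b i ≤ 1`, the remaining indices carry at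
least half of the total `κ * ε` of the `1 - b i`, and there `b i ≥ exp (-1 / ε)`. Hence
`G (1 / 2) - G 1 ≥ exp (-1 / ε) * ε / 2`, which dominates `ε ^ (5 / ε)` once `ε ≤ 1 / 2`.
-/

open Finset Real

lemma card_filter_lt_mul_le_sum {ι : Type*} (s : Finset ι) {y : ι → ℝ} (hy : ∀ i ∈ s, 0 ≤ y i)
    (t : ℝ) : #{i ∈ s | t < y i} * t ≤ ∑ i ∈ s, y i :=
  calc (#{i ∈ s | t < y i} : ℝ) * t ≤ ∑ i ∈ s with t < y i, y i := by
        simpa using card_nsmul_le_sum _ y t fun i hi ↦ (mem_filter.1 hi).2.le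
    _ ≤ ∑ i ∈ s, y i := sum_le_sum_of_subset_of_nonneg (filter_subset _ _)
        fun i hi _ ↦ hy i hi

section

variable {ι : Type*} [Fintype ι]

lemma mul_sum_one_sub_sub_card_le_sum_mul_one_sub {b : ι → ℝ} (hb₀ : ∀ i, 0 ≤ b i)
    (hb₁ : ∀ i, b i ≤ 1) {c : ℝ} (hc : 0 ≤ c) :
    c * (∑ i, (1 - b i) - #{i | b i < c}) ≤ ∑ i, b i * (1 - b i) := by
  have hlow : ∑ i with b i < c, (1 - b i) ≤ #{i | b i < c} := by
    simpa using sum_le_sum fun i (_ : i ∈ ({i | b i < c} : Finset ι)) ↦ sub_le_self 1 (hb₀ i)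
  calc c * (∑ i, (1 - b i) - #{i | b i < c}) ≤ c * ∑ i with ¬b i < c, (1 - b i) := by
        rw [← sum_filter_add_sum_filter_not univ (fun i ↦ b i < c)]; gcongr; linarith
    _ = ∑ i with ¬b i < c, c * (1 - b i) := mul_sum _ _ _
    _ ≤ ∑ i with ¬b i < c, b i * (1 - b i) := sum_le_sum fun i hi ↦
        mul_le_mul_of_nonneg_right (not_lt.1 (mem_filter.1 hi).2) (sub_nonneg.2 (hb₁ i))
    _ ≤ ∑ i, b i * (1 - b i) := sum_le_sum_of_subset_of_nonneg (subset_univ _)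
        fun i _ _ ↦ mul_nonneg (hb₀ i) (sub_nonneg.2 (hb₁ i))

lemma sum_one_sub_exp_neg_le_sum (y : ι → ℝ) : ∑ i, (1 - exp (-y i)) ≤ ∑ i, y i :=
  sum_le_sum fun i _ ↦ by linarith [one_sub_le_exp_neg (y i)]

lemma exp_neg_mul_le_sum_exp_neg_mul_one_sub_exp_neg {y : ι → ℝ} (hy : ∀ i, 0 ≤ y i)
    (hS : 0 < ∑ i, (1 - exp (-y i))) :
    exp (-(2 * (∑ i, y i) / ∑ i, (1 - exp (-y i)))) * ((∑ i, (1 - exp (-y i))) / 2) ≤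
      ∑ i, exp (-y i) * (1 - exp (-y i)) := by
  set S := ∑ i, (1 - exp (-y i))
  set t := 2 * (∑ i, y i) / S
  have ht : 0 < t := by
    have := sum_one_sub_exp_neg_le_sum y
    exact div_pos (by linarith) hS
  have hcard : (#{i | exp (-y i) < exp (-t)} : ℝ) ≤ S / 2 := by
    have hmarkov := card_filter_lt_mul_le_sum univ (fun i _ ↦ hy i) t
    have hSt : S / 2 * t = ∑ i, y i := by simp only [t]; field_simp
    simp only [exp_lt_exp, neg_lt_neg_iff]
    exact le_of_mul_le_mul_right (hmarkov.trans hSt.ge) ht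
  calc exp (-t) * (S / 2) ≤ exp (-t) * (S - #{i | exp (-y i) < exp (-t)}) := by
        gcongr; linarith
    _ ≤ _ := mul_sum_one_sub_sub_card_le_sum_mul_one_sub (fun i ↦ (exp_pos _).le)
        (fun i ↦ exp_le_one_iff.2 (by linarith [hy i])) (exp_pos _).le

end

lemma rpow_five_div_le_exp_neg_inv_mul_half {ε : ℝ} (hε₀ : 0 < ε) (hε : ε ≤ 1 / 2) :
    ε ^ (5 / ε) ≤ exp (-(1 / ε)) * (ε / 2) := by
  have hrhs : exp (-(1 / ε)) * (ε / 2) = exp (-(1 / ε) + log ε - log 2) := by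
    rw [exp_sub, exp_add, exp_log hε₀, exp_log two_pos]; ring
  rw [rpow_def_of_pos hε₀, hrhs, exp_le_exp]
  have hlog : log ε ≤ -log 2 := by
    rw [← log_inv]; exact log_le_log hε₀ (by linarith)
  have hlog2 := log_two_gt_d9
  have key : 5 * log ε ≤ -1 + ε * log ε - ε * log 2 := by
    nlinarith [mul_le_mul_of_nonneg_left hlog (by linarith : (0 : ℝ) ≤ 5 - ε)]
  calc log ε * (5 / ε) = 5 * log ε / ε := by ring
    _ ≤ (-1 + ε * log ε - ε * log 2) / ε := by gcongr
    _ = -(1 / ε) + log ε - log 2 := by field_simp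

theorem stmt6 (κ : ℕ) (hκ : 0 < κ) (w : Fin κ → ℝ) (hw : ∀ i, 0 ≤ w i)
    (hsum : ∑ i, w i = 1) (G : ℝ → ℝ)
    (hG : ∀ s, G s = (1 / κ) * ∑ i, Real.exp (-(w i * κ * s)))
    (ε : ℝ) (hε : ε = 1 - G (1 / 2)) (hεpos : 0 < ε) :
    G (1 / 2) - G 1 ≥ ε ^ (5 / ε) := by
  set y : Fin κ → ℝ := fun i ↦ w i * κ / 2
  have hκ₀ : (0 : ℝ) < κ := Nat.cast_pos.2 hκ
  have hy : ∀ i, 0 ≤ y i := fun i ↦ by have := hw i; positivity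
  have hGhalf : G (1 / 2) = 1 / κ * ∑ i, exp (-y i) := by
    rw [hG]; congr! 4; ring
  have hGone : G 1 = 1 / κ * ∑ i, exp (-y i) ^ 2 := by
    rw [hG]; congr! 2 with i; rw [sq, ← exp_add]; simp only [y]; ring_nf
  have hM : ∑ i, y i = κ / 2 := by simp only [y, ← sum_div, ← sum_mul, hsum, one_mul]
  have hS : ∑ i, (1 - exp (-y i)) = κ * ε := by
    rw [sum_sub_distrib, hε, hGhalf]
    simp only [sum_const, card_univ, Fintype.card_fin, nsmul_eq_mul, mul_one]
    field_simp
  have hε_le : ε ≤ 1 / 2 := by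
    have := sum_one_sub_exp_neg_le_sum y
    rw [hS, hM] at this
    nlinarith
  have hmass := exp_neg_mul_le_sum_exp_neg_mul_one_sub_exp_neg hy (by rw [hS]; positivity)
  rw [hS, hM] at hmass
  calc ε ^ (5 / ε) ≤ exp (-(1 / ε)) * (ε / 2) := rpow_five_div_le_exp_neg_inv_mul_half hεpos hε_le
    _ = 1 / κ * (exp (-(2 * (κ / 2) / (κ * ε))) * (κ * ε / 2)) := by field_simp
    _ ≤ 1 / κ * ∑ i, exp (-y i) * (1 - exp (-y i)) := by gcongr
    _ = G (1 / 2) - G 1 := by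
      rw [hGhalf, hGone, ← mul_sub, ← sum_sub_distrib]; congr! 2; ring
end

section
/- Let $w_1,\dots,w_\kappa$ be nonnegative reals summing to $1$ with $G(s) = \frac{1}{\kappa}\sum_i e^{-w_i\kappa s}$. For any $s \ge 0$ and $\delta \ge 0$, $\frac{1}{2}[G(s) + G(s+2\delta)] - G(s+\delta) = \frac{1}{2\kappa}\sum_i e^{-w_i\kappa s}(1 - e^{-w_i\kappa\delta})^2$, and consequently $\frac{1}{2}[G(s)+G(s+2\delta)] - G(s+\delta) \ge \frac{1}{2}\left[G(s/2) - G(s/2+\delta)\right]^2$. -/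
/-!
Each summand of `G` is the exponential `t ↦ exp (-(r t))` with rate `r = κ wᵢ`, whose second
difference `½ (e(s) + e(s + 2δ)) - e(s + δ)` equals `½ e(s) (1 - e(δ))²`, which is also half the
square of the first difference `e(s/2) - e(s/2 + δ)`. Averaging over `i`, the inequality is
`(mean g)² ≤ mean g²` for these first differences `g`.
-/

open Finset Real

lemma exp_neg_second_difference (r s δ : ℝ) :
    (1 / 2) * (exp (-(r * s)) + exp (-(r * (s + 2 * δ)))) - exp (-(r * (s + δ))) =
      (1 / 2) * (exp (-(r * s)) * (1 - exp (-(r * δ))) ^ 2) := by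
  have h₂ : exp (-(r * (s + 2 * δ))) = exp (-(r * s)) * exp (-(r * δ)) ^ 2 := by
    rw [← exp_nat_mul, ← exp_add]; ring_nf
  have h₁ : exp (-(r * (s + δ))) = exp (-(r * s)) * exp (-(r * δ)) := by
    rw [← exp_add]; ring_nf
  rw [h₁, h₂]; ring

lemma exp_neg_first_difference_sq (r s δ : ℝ) :
    (exp (-(r * (s / 2))) - exp (-(r * (s / 2 + δ)))) ^ 2 =
      exp (-(r * s)) * (1 - exp (-(r * δ))) ^ 2 := by
  have h₀ : exp (-(r * s)) = exp (-(r * (s / 2))) ^ 2 := by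
    rw [← exp_nat_mul]; ring_nf
  have h₁ : exp (-(r * (s / 2 + δ))) = exp (-(r * (s / 2))) * exp (-(r * δ)) := by
    rw [← exp_add]; ring_nf
  rw [h₀, h₁]; ring

lemma sum_exp_neg_second_difference {ι : Type*} (t : Finset ι) (r : ι → ℝ) (s δ : ℝ) :
    (1 / 2) * (∑ i ∈ t, exp (-(r i * s)) + ∑ i ∈ t, exp (-(r i * (s + 2 * δ)))) -
        ∑ i ∈ t, exp (-(r i * (s + δ))) =
      (1 / 2) * ∑ i ∈ t, exp (-(r i * s)) * (1 - exp (-(r i * δ))) ^ 2 := by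
  simp only [← sum_add_distrib, mul_sum, ← sum_sub_distrib, exp_neg_second_difference]

lemma sq_mean_le_mean_sq {n : ℕ} (g : Fin n → ℝ) :
    ((1 / n) * ∑ i, g i) ^ 2 ≤ (1 / n) * ∑ i, g i ^ 2 := by
  simpa [div_eq_inv_mul] using sum_div_card_sq_le_sum_sq_div_card (s := univ) (f := g)

theorem stmt7_general (κ : ℕ) (w : Fin κ → ℝ) (G : ℝ → ℝ)
    (hG : ∀ s, G s = (1 / κ) * ∑ i, Real.exp (-(w i * κ * s)))
    (s δ : ℝ) :
    (1 / 2) * (G s + G (s + 2 * δ)) - G (s + δ) =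
      (1 / (2 * κ)) * ∑ i, Real.exp (-(w i * κ * s)) * (1 - Real.exp (-(w i * κ * δ))) ^ 2 ∧
    (1 / 2) * (G s + G (s + 2 * δ)) - G (s + δ) ≥
      (1 / 2) * (G (s / 2) - G (s / 2 + δ)) ^ 2 := by
  have second_difference : (1 / 2) * (G s + G (s + 2 * δ)) - G (s + δ) =
      (1 / (2 * κ)) * ∑ i, exp (-(w i * κ * s)) * (1 - exp (-(w i * κ * δ))) ^ 2 := by
    simp only [hG]
    linear_combination (1 / (κ : ℝ)) * sum_exp_neg_second_difference univ (fun i ↦ w i * κ) s δ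
  have first_difference : G (s / 2) - G (s / 2 + δ) =
      (1 / κ) * ∑ i, (exp (-(w i * κ * (s / 2))) - exp (-(w i * κ * (s / 2 + δ)))) := by
    simp only [hG, sum_sub_distrib]; ring
  refine ⟨second_difference, ?_⟩
  rw [second_difference, first_difference, ge_iff_le]
  calc (1 / 2) * ((1 / κ) * ∑ i, (exp (-(w i * κ * (s / 2))) - exp (-(w i * κ * (s / 2 + δ))))) ^ 2
      ≤ (1 / 2) * ((1 / κ) *
          ∑ i, (exp (-(w i * κ * (s / 2))) - exp (-(w i * κ * (s / 2 + δ)))) ^ 2) := by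
        gcongr; exact sq_mean_le_mean_sq _
    _ = (1 / (2 * κ)) * ∑ i, exp (-(w i * κ * s)) * (1 - exp (-(w i * κ * δ))) ^ 2 := by
        simp only [exp_neg_first_difference_sq]; ring

theorem stmt7 (κ : ℕ) (hκ : 0 < κ) (w : Fin κ → ℝ) (hw : ∀ i, 0 ≤ w i)
    (hsum : ∑ i, w i = 1) (G : ℝ → ℝ)
    (hG : ∀ s, G s = (1 / κ) * ∑ i, Real.exp (-(w i * κ * s)))
    (s δ : ℝ) (hs : 0 ≤ s) (hδ : 0 ≤ δ) :
    (1 / 2) * (G s + G (s + 2 * δ)) - G (s + δ) =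
      (1 / (2 * κ)) * ∑ i, Real.exp (-(w i * κ * s)) * (1 - Real.exp (-(w i * κ * δ))) ^ 2 ∧
    (1 / 2) * (G s + G (s + 2 * δ)) - G (s + δ) ≥
      (1 / 2) * (G (s / 2) - G (s / 2 + δ)) ^ 2 :=
  stmt7_general κ w G hG s δ
end

section
/- Let $G:[0,\infty)\to\mathbb{R}$ be convex, nonincreasing, with $G(0)=1$. Fix $s \le 1$, let $h$ be the secant line of $G$ through the points at $s$ and $s+1/2$, and suppose additionally that $G(s) = \frac1\kappa\sum_i e^{-w_i\kappa s}$ for nonnegative $w_i$ summing to 1. Then for any $0 \le \delta \le 1/4$, $h(s+\delta) - G(s+\delta) \ge \frac{\delta^2}{2}\left[G(1/2) - G(1)\right]^2$. -/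
/-!
Convexity of `G` on `[s, s + 1/4]` bounds the gap between the secant `h` and `G` at `s + δ`
from below by `4δ` times the midpoint defect `(G s + G (s + 1/2)) / 2 - G (s + 1/4)`.
Each exponential `x ↦ e^{-t x}` has midpoint defect at least `(e^{-t/2} - e^{-t})² / 8`
(for `s ≤ 1`), and the Cauchy–Schwarz inequality carries this over to the average `G`.
-/

open Real Finset

lemma sq_exp_neg_drop_le_midpoint_gap {t s : ℝ} (ht : 0 ≤ t) (hs : s ≤ 1) :
    (exp (-(t * (1 / 2))) - exp (-(t * 1))) ^ 2 ≤
      8 * ((exp (-(t * s)) + exp (-(t * (s + 1 / 2)))) / 2 - exp (-(t * (s + 1 / 4)))) := by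
  have hshift (x y : ℝ) (n : ℕ) (hy : y = x + n / 4) :
      exp (-(t * y)) = exp (-(t * x)) * exp (-(t / 4)) ^ n := by
    rw [← exp_nat_mul, ← exp_add, hy]; ring_nf
  have hdecay : exp (-(t * 1)) ≤ exp (-(t * s)) := exp_le_exp.mpr (by nlinarith)
  rw [hshift 0 1 4 (by norm_num)] at hdecay ⊢
  rw [hshift 0 (1 / 2) 2 (by norm_num), hshift s (s + 1 / 2) 2 (by ring),
    hshift s (s + 1 / 4) 1 (by ring)]
  -- with `u = e^{-t/4}` and `v = e^{-ts} ≥ u⁴` the claim reads `u⁴(1-u)²(1+u)² ≤ 4v(1-u)²`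
  set u := exp (-(t / 4))
  set v := exp (-(t * s))
  have hu : 0 ≤ u ∧ u ≤ 1 := ⟨(exp_pos _).le, exp_le_one_iff.mpr (by linarith)⟩
  simp only [mul_zero, neg_zero, exp_zero, one_mul] at hdecay ⊢
  have h1 : 0 ≤ (1 - u) ^ 2 * (v - u ^ 4) := by have := sub_nonneg.mpr hdecay; positivity
  have h2 : 0 ≤ u ^ 4 * (1 - u) ^ 2 * ((1 - u) * (3 + u)) := by
    have := sub_nonneg.mpr hu.2; have := hu.1; positivity
  linear_combination 4 * h1 + h2

lemma sq_mean_le_of_sq_le {ι : Type*} [Fintype ι] {a b : ι → ℝ} {c : ℝ}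
    (h : ∀ i, a i ^ 2 ≤ c * b i) :
    (1 / Fintype.card ι * ∑ i, a i) ^ 2 ≤ c * (1 / Fintype.card ι * ∑ i, b i) :=
  calc (1 / Fintype.card ι * ∑ i, a i) ^ 2 = ((∑ i, a i) / #(univ : Finset ι)) ^ 2 := by
        rw [card_univ, one_div_mul_eq_div]
    _ ≤ (∑ i, a i ^ 2) / #(univ : Finset ι) := sum_div_card_sq_le_sum_sq_div_card
    _ ≤ (∑ i, c * b i) / #(univ : Finset ι) := by gcongr with i; exact h i
    _ = c * (1 / Fintype.card ι * ∑ i, b i) := by rw [← mul_sum, card_univ]; ring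

lemma ConvexOn.mul_midpoint_gap_le_secant_sub {f : ℝ → ℝ} {D : Set ℝ} (hf : ConvexOn ℝ D f)
    {x ℓ δ : ℝ} (hx : x ∈ D) (hxℓ : x + ℓ ∈ D) (hℓ : 0 < ℓ) (hδ0 : 0 ≤ δ) (hδℓ : δ ≤ ℓ) :
    δ / ℓ * ((f x + f (x + 2 * ℓ)) / 2 - f (x + ℓ)) ≤
      f x + δ / (2 * ℓ) * (f (x + 2 * ℓ) - f x) - f (x + δ) := by
  have hθ : δ / ℓ ≤ 1 := (div_le_one hℓ).mpr hδℓ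
  have hconv := hf.2 hx hxℓ (sub_nonneg.mpr hθ) (div_nonneg hδ0 hℓ.le) (sub_add_cancel 1 _)
  have hpt : (1 - δ / ℓ) • x + (δ / ℓ) • (x + ℓ) = x + δ := by
    simp only [smul_eq_mul]; field_simp; ring
  rw [hpt, smul_eq_mul, smul_eq_mul] at hconv
  have hslope : δ / (2 * ℓ) = δ / ℓ / 2 := by ring
  rw [hslope]
  linarith

theorem stmt8_general (κ : ℕ) (w : Fin κ → ℝ) (hw : ∀ i, 0 ≤ w i)
    (G : ℝ → ℝ)
    (hG : ∀ s, G s = (1 / κ) * ∑ i, Real.exp (-(w i * κ * s)))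
    (hGconv : ConvexOn ℝ (Set.Ici (0 : ℝ)) G)
    (s : ℝ) (hs0 : 0 ≤ s) (hs1 : s ≤ 1)
    (h : ℝ → ℝ)
    (hsec : ∀ x, h x = G s + 2 * (G (s + 1 / 2) - G s) * (x - s)) :
    ∀ δ : ℝ, 0 ≤ δ → δ ≤ 1 / 4 →
      h (s + δ) - G (s + δ) ≥ (δ ^ 2 / 2) * (G (1 / 2) - G 1) ^ 2 := by
  intro δ hδ0 hδ1
  have hdrop : G (1 / 2) - G 1 =
      1 / κ * ∑ i, (exp (-(w i * κ * (1 / 2))) - exp (-(w i * κ * 1))) := by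
    rw [hG, hG, sum_sub_distrib, mul_sub]
  have hmid : (G s + G (s + 1 / 2)) / 2 - G (s + 1 / 4) = 1 / κ * ∑ i,
      ((exp (-(w i * κ * s)) + exp (-(w i * κ * (s + 1 / 2)))) / 2
        - exp (-(w i * κ * (s + 1 / 4)))) := by
    rw [hG, hG, hG, sum_sub_distrib, ← sum_div, sum_add_distrib]; ring
  have hgap : (G (1 / 2) - G 1) ^ 2 ≤ 8 * ((G s + G (s + 1 / 2)) / 2 - G (s + 1 / 4)) := by
    have := sq_mean_le_of_sq_le fun i =>
      sq_exp_neg_drop_le_midpoint_gap (mul_nonneg (hw i) κ.cast_nonneg) hs1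
    rwa [Fintype.card_fin, ← hdrop, ← hmid] at this
  have hsecant := hGconv.mul_midpoint_gap_le_secant_sub (x := s) (ℓ := 1 / 4) hs0
    (by simp only [Set.mem_Ici]; linarith) (by norm_num) hδ0 hδ1
  rw [show s + 2 * (1 / 4) = s + 1 / 2 by ring] at hsecant
  rw [ge_iff_le, hsec]
  calc δ ^ 2 / 2 * (G (1 / 2) - G 1) ^ 2 ≤ δ / 2 * (G (1 / 2) - G 1) ^ 2 := by
        gcongr; nlinarith
    _ ≤ δ / 2 * (8 * ((G s + G (s + 1 / 2)) / 2 - G (s + 1 / 4))) := by gcongr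
    _ = δ / (1 / 4) * ((G s + G (s + 1 / 2)) / 2 - G (s + 1 / 4)) := by ring
    _ ≤ _ := hsecant.trans_eq (by ring)

theorem stmt8 (κ : ℕ) (hκ : 0 < κ) (w : Fin κ → ℝ) (hw : ∀ i, 0 ≤ w i)
    (hsum : ∑ i, w i = 1) (G : ℝ → ℝ)
    (hG : ∀ s, G s = (1 / κ) * ∑ i, Real.exp (-(w i * κ * s)))
    (hGconv : ConvexOn ℝ (Set.Ici (0 : ℝ)) G)
    (hGanti : AntitoneOn G (Set.Ici (0 : ℝ)))
    (hG0 : G 0 = 1)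
    (s : ℝ) (hs0 : 0 ≤ s) (hs1 : s ≤ 1)
    (h : ℝ → ℝ)
    (hsec : ∀ x, h x = G s + 2 * (G (s + 1 / 2) - G s) * (x - s)) :
    ∀ δ : ℝ, 0 ≤ δ → δ ≤ 1 / 4 →
      h (s + δ) - G (s + δ) ≥ (δ ^ 2 / 2) * (G (1 / 2) - G 1) ^ 2 :=
  stmt8_general κ w hw G hG hGconv s hs0 hs1 h hsec
end

section
/- Suppose $0 < \chi \le 1$ and $0 < w_i \le 1$ for each $i$, with $\sum_i w_i = 1$, $\sum_i w_i^2 = \chi$, and $\chi\kappa \ge 1$ where $\kappa$ is the number of terms. Then $\sum_{i: w_i \le 6\chi} \frac{1}{4}\left(1 - e^{-w_i\kappa/6}\right) \ge \frac{1}{38\chi}\sum_{i : w_i \le 6\chi} w_i$, and consequently $\sum_i \frac{1}{4}(1 - e^{-w_i\kappa/6}) \ge \frac{1}{46\chi}$. -/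
/-!
Since $t \mapsto 1 - e^{-t}$ is concave and vanishes at $0$, on $[0, \chi\kappa]$ it lies above its
chord, whose slope is at least $1 - e^{-1}$ because $\chi\kappa \ge 1$; this gives the pointwise
bound $\frac14(1 - e^{-w\kappa/6}) \ge \frac{w}{38\chi}$ whenever $w \le 6\chi$. The weights above
$6\chi$ carry total mass at most $\sum_i w_i^2 / (6\chi) = 1/6$ (Markov), so the remaining weights
carry at least $5/6$, and $\frac{5}{6 \cdot 38} > \frac{1}{46}$.
-/

open Real Finset

theorem mul_one_sub_exp_neg_le {x s : ℝ} (hx : 0 ≤ x) (hxs : x ≤ s) :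
    x * (1 - exp (-s)) ≤ s * (1 - exp (-x)) := by
  rcases hx.eq_or_lt with rfl | hx
  · simp
  have hs : 0 < s := hx.trans_le hxs
  have hchord := convexOn_exp.2 (Set.mem_univ (-s)) (Set.mem_univ 0)
    (div_nonneg hx.le hs.le) (sub_nonneg.2 ((div_le_one hs).2 hxs)) (by ring)
  have hcomb : x / s * -s = -x := by field_simp
  simp only [smul_eq_mul, mul_zero, add_zero, exp_zero, mul_one, hcomb] at hchord
  have := mul_le_mul_of_nonneg_left hchord hs.le
  field_simp at this
  linarith

theorem sum_filter_lt_le_sum_sq_div {ι : Type*} (s : Finset ι) (f : ι → ℝ) {t : ℝ}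
    (ht : 0 < t) : ∑ i ∈ s with t < f i, f i ≤ (∑ i ∈ s, f i ^ 2) / t := by
  rw [sum_div]
  calc ∑ i ∈ s with t < f i, f i
      ≤ ∑ i ∈ s with t < f i, f i ^ 2 / t := by
        refine sum_le_sum fun i hi => ?_
        have hti : t < f i := (mem_filter.1 hi).2
        rw [le_div_iff₀ ht]
        nlinarith
    _ ≤ ∑ i ∈ s, f i ^ 2 / t :=
        sum_le_sum_of_subset_of_nonneg (filter_subset _ _) fun i _ _ => by positivity

theorem div_le_quarter_one_sub_exp_neg {w χ κ : ℝ} (hw : 0 ≤ w) (hwχ : w ≤ 6 * χ)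
    (hχκ : 1 ≤ χ * κ) : 1 / (38 * χ) * w ≤ 1 / 4 * (1 - exp (-(w * κ / 6))) := by
  have hχ : 0 < χ := (by linarith : 0 ≤ χ).lt_of_ne (by rintro rfl; simp at hχκ; linarith)
  have hκ : 0 < κ := pos_of_mul_pos_right (one_pos.trans_le hχκ) hχ.le
  have hchord := mul_one_sub_exp_neg_le (x := w * κ / 6) (s := χ * κ) (by positivity)
    (by nlinarith)
  have hslope : 12 / 19 ≤ 1 - exp (-(χ * κ)) := by
    have : exp (-(χ * κ)) ≤ exp (-1) := exp_le_exp.2 (by linarith)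
    linarith [exp_neg_one_lt_d9]
  have : w * κ / 6 * (12 / 19) ≤ χ * κ * (1 - exp (-(w * κ / 6))) :=
    (mul_le_mul_of_nonneg_left hslope (by positivity)).trans hchord
  rw [div_mul_eq_mul_div, one_mul, div_le_iff₀ (by positivity)]
  nlinarith

theorem stmt14_general (κ : ℕ) (w : Fin κ → ℝ) (hw0 : ∀ i, 0 < w i)
    (hsum : ∑ i, w i = 1) (χ : ℝ) (hχ : χ = ∑ i, (w i) ^ 2)
    (hχ0 : 0 < χ) (hχκ : 1 ≤ χ * κ) :
    ∑ i ∈ Finset.univ.filter (fun i => w i ≤ 6 * χ),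
        (1 / 4) * (1 - Real.exp (-(w i * κ / 6))) ≥
      (1 / (38 * χ)) * ∑ i ∈ Finset.univ.filter (fun i => w i ≤ 6 * χ), w i ∧
    ∑ i, (1 / 4) * (1 - Real.exp (-(w i * κ / 6))) ≥ 1 / (46 * χ) := by
  have hlow : 1 / (38 * χ) * ∑ i with w i ≤ 6 * χ, w i ≤
      ∑ i with w i ≤ 6 * χ, 1 / 4 * (1 - exp (-(w i * κ / 6))) := by
    rw [mul_sum]
    exact sum_le_sum fun i hi =>
      div_le_quarter_one_sub_exp_neg (hw0 i).le (mem_filter.1 hi).2 hχκ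
  refine ⟨hlow, ?_⟩
  have hmarkov : ∑ i with ¬ w i ≤ 6 * χ, w i ≤ 1 / 6 := by
    simp_rw [not_le]
    refine (sum_filter_lt_le_sum_sq_div univ w (by positivity)).trans_eq ?_
    rw [← hχ]
    field_simp
  have hbulk : 5 / 6 ≤ ∑ i with w i ≤ 6 * χ, w i := by
    linarith [sum_filter_add_sum_filter_not univ (fun i => w i ≤ 6 * χ) w]
  have hrest : ∑ i with w i ≤ 6 * χ, 1 / 4 * (1 - exp (-(w i * κ / 6))) ≤
      ∑ i, 1 / 4 * (1 - exp (-(w i * κ / 6))) :=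
    sum_le_sum_of_subset_of_nonneg (filter_subset _ _) fun i _ _ => by
      have : exp (-(w i * κ / 6)) ≤ 1 := exp_le_one_iff.2 (by have := hw0 i; nlinarith)
      linarith
  have : 1 / (46 * χ) ≤ 1 / (38 * χ) * (5 / 6) := by
    rw [div_mul_eq_mul_div, one_mul, div_le_div_iff₀ (by positivity) (by positivity)]
    nlinarith
  have := mul_le_mul_of_nonneg_left hbulk (by positivity : (0 : ℝ) ≤ 1 / (38 * χ))
  linarith

theorem stmt14 (κ : ℕ) (w : Fin κ → ℝ) (hw0 : ∀ i, 0 < w i) (hw1 : ∀ i, w i ≤ 1)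
    (hsum : ∑ i, w i = 1) (χ : ℝ) (hχ : χ = ∑ i, (w i) ^ 2)
    (hχ0 : 0 < χ) (hχ1 : χ ≤ 1) (hχκ : 1 ≤ χ * κ) :
    ∑ i ∈ Finset.univ.filter (fun i => w i ≤ 6 * χ),
        (1 / 4) * (1 - Real.exp (-(w i * κ / 6))) ≥
      (1 / (38 * χ)) * ∑ i ∈ Finset.univ.filter (fun i => w i ≤ 6 * χ), w i ∧
    ∑ i, (1 / 4) * (1 - Real.exp (-(w i * κ / 6))) ≥ 1 / (46 * χ) :=
  stmt14_general κ w hw0 hsum χ hχ hχ0 hχκ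
end

section
/- Let $\kappa \ge 2$ be an integer and $0 \le w \le 1$. Define $E(w) = \left(1 - (1-w/2)^{\lfloor\kappa/2\rfloor}\right)\frac{2}{\kappa} + (1-w/2)^{\lfloor\kappa/2\rfloor} w$. Then $E(w) \le 5/\kappa$. -/
theorem stmt15 (κ : ℕ) (hκ : 2 ≤ κ) (w : ℝ) (hw0 : 0 ≤ w) (hw1 : w ≤ 1) :
    (1 - (1 - w / 2) ^ (κ / 2)) * (2 / κ) + (1 - w / 2) ^ (κ / 2) * w ≤ 5 / κ := by
  have hk0 : (0:ℝ) < κ := by positivity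
  set m := κ / 2 with hm
  have hb0 : (0:ℝ) ≤ 1 - w / 2 := by linarith
  have hp0 : (0:ℝ) ≤ (1 - w / 2) ^ m := by positivity
  have hp1 : (1 - w / 2) ^ m ≤ 1 := pow_le_one₀ hb0 (by linarith)
  -- m ≥ κ/3 in reals
  have hm3 : (κ:ℝ) / 3 ≤ (m:ℝ) := by
    have h1 : κ ≤ 2 * m + 1 := by omega
    have h2 : 1 ≤ m := by omega
    have h1' : (κ:ℝ) ≤ 2 * m + 1 := by exact_mod_cast h1
    have h2' : (1:ℝ) ≤ m := by exact_mod_cast h2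
    linarith
  -- p ≤ exp(-w * m / 2) ≤ exp(-w*κ/6)
  have hbe : 1 - w / 2 ≤ Real.exp (-(w / 2)) := by
    have := Real.add_one_le_exp (-(w / 2)); linarith
  have hpe : (1 - w / 2) ^ m ≤ Real.exp (-(w * κ / 6)) := by
    calc (1 - w / 2) ^ m ≤ Real.exp (-(w / 2)) ^ m := pow_le_pow_left₀ hb0 hbe m
      _ = Real.exp (-(w / 2) * m) := by rw [← Real.exp_nat_mul]; ring_nf
      _ ≤ Real.exp (-(w * κ / 6)) := by
          apply Real.exp_le_exp.mpr
          have : w * ((κ:ℝ)/3) ≤ w * m := mul_le_mul_of_nonneg_left hm3 hw0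
          nlinarith
  -- key: w * p ≤ 3/κ, i.e. w*κ*exp(-wκ/6) ≤ 3
  have hkey : w * (1 - w / 2) ^ m ≤ 3 / κ := by
    have hwp : w * (1 - w / 2) ^ m ≤ w * Real.exp (-(w * κ / 6)) :=
      mul_le_mul_of_nonneg_left hpe hw0
    have hx : 0 ≤ w * κ := by positivity
    set x := w * κ with hxd
    -- x * exp(-x/6) ≤ 3
    have h12 : (1 + x / 12) ≤ Real.exp (x / 12) := by
      have := Real.add_one_le_exp (x / 12); linarith
    have hsq : x / 3 ≤ Real.exp (x / 6) := by
      have h1 : x / 3 ≤ (1 + x / 12) ^ 2 := by nlinarith [sq_nonneg (1 - x / 12)]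
      have h2 : (1 + x / 12) ^ 2 ≤ Real.exp (x / 12) ^ 2 := by
        apply pow_le_pow_left₀ (by positivity) h12
      have h3 : Real.exp (x / 12) ^ 2 = Real.exp (x / 6) := by
        rw [← Real.exp_nat_mul]; norm_num; ring_nf
      linarith [h1, h2, h3.le, h3.ge]
    have hxe : x * Real.exp (-(x / 6)) ≤ 3 := by
      rw [Real.exp_neg]
      have he : 0 < Real.exp (x / 6) := Real.exp_pos _
      rw [mul_inv_le_iff₀ he]
      linarith
    have : w * Real.exp (-(w * κ / 6)) ≤ 3 / κ := by
      rw [le_div_iff₀ hk0]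
      calc w * Real.exp (-(w * κ / 6)) * κ = x * Real.exp (-(x / 6)) := by
            rw [hxd]; ring_nf
        _ ≤ 3 := hxe
    linarith
  have h2k : (1 - (1 - w / 2) ^ m) * (2 / κ) ≤ 2 / κ := by
    have : 0 ≤ (2:ℝ)/κ := by positivity
    nlinarith
  have : (1 - w / 2) ^ m * w ≤ 3 / κ := by linarith [hkey, mul_comm w ((1 - w / 2) ^ m)]
  have h5 : (2:ℝ)/κ + 3/κ = 5/κ := by ring
  linarith
end

section
/- Let $G:[0,\infty)\to\mathbb{R}$ be convex and decreasing with $G(0) = 1$, and let $\gamma = G(1/2) - G(1) > 0$. Suppose for every $s > 0$ that $G(s) - G(2s) \le \sqrt{G(2s) - G(4s)}$. Then for every integer $r \ge 2$, $G(2^{-r}) - G(1/2) \le r\,\gamma^{1/2^{r-1}}$. -/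
/-!
Write `d s = G s - G (2 s)`. The doubling inequality says `d s ^ 2 ≤ d (2 s)`, while convexity
gives `d (2 s) ≤ 2 d s`; together they bound `d` by `2`, and then `d s ^ (2 ^ n) ≤ d (2 ^ n s) ≤ 2`
for all `n` forces `d ≤ 1`, in particular `γ = d (1/2) ≤ 1`. Along the dyadic points `2⁻ᵏ` the
doubling inequality makes the increments satisfy `aₖ₊₁ ≤ √aₖ` with `a₀ = γ`, so `aₖ ≤ γ ^ (1/2ᵏ)`;
summing the `r - 1` increments between `1/2` and `2⁻ʳ`, each at most `γ ^ (1/2 ^ (r-1))` because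
`γ ≤ 1`, gives the bound.
-/

open Finset Real

lemma le_one_of_forall_pow_two_pow_le {x C : ℝ} (h : ∀ n : ℕ, x ^ 2 ^ n ≤ C) : x ≤ 1 := by
  by_contra! hx
  obtain ⟨n, hn⟩ := pow_unbounded_of_one_lt C hx
  have : x ^ n ≤ x ^ 2 ^ n := pow_le_pow_right₀ hx.le Nat.lt_two_pow_self.le
  linarith [h n]

section DoublingSquare

variable {f : ℝ → ℝ}

lemma pow_two_pow_le_comp_two_pow_mul (hsq : ∀ s, 0 < s → f s ^ 2 ≤ f (2 * s)) (n : ℕ)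
    {s : ℝ} (hs : 0 < s) : f s ^ 2 ^ n ≤ f (2 ^ n * s) := by
  induction n generalizing s with
  | zero => simp
  | succ n ih =>
    calc f s ^ 2 ^ (n + 1) = (f s ^ 2) ^ 2 ^ n := by rw [pow_succ', pow_mul]
      _ ≤ f (2 * s) ^ 2 ^ n := pow_le_pow_left₀ (sq_nonneg _) (hsq s hs) _
      _ ≤ f (2 ^ n * (2 * s)) := ih (by positivity)
      _ = f (2 ^ (n + 1) * s) := by rw [pow_succ, mul_assoc]

lemma le_one_of_sq_le_comp_two_mul {C : ℝ} (hsq : ∀ s, 0 < s → f s ^ 2 ≤ f (2 * s))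
    (hC : ∀ s, 0 < s → f s ≤ C) {s : ℝ} (hs : 0 < s) : f s ≤ 1 :=
  le_one_of_forall_pow_two_pow_le fun n =>
    (pow_two_pow_le_comp_two_pow_mul hsq n hs).trans (hC _ (by positivity))

end DoublingSquare

lemma le_rpow_one_div_two_pow_of_le_sqrt {a : ℕ → ℝ} (h₀ : 0 ≤ a 0)
    (h : ∀ k, a (k + 1) ≤ √(a k)) (k : ℕ) : a k ≤ a 0 ^ ((1 : ℝ) / 2 ^ k) := by
  induction k with
  | zero => simp
  | succ k ih =>
    calc a (k + 1) ≤ √(a k) := h k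
      _ ≤ √(a 0 ^ ((1 : ℝ) / 2 ^ k)) := sqrt_le_sqrt ih
      _ = a 0 ^ ((1 : ℝ) / 2 ^ (k + 1)) := by
        rw [sqrt_eq_rpow, ← rpow_mul h₀, pow_succ]
        ring_nf

lemma rpow_one_div_two_pow_le_of_le {γ : ℝ} (h₀ : 0 ≤ γ) (h₁ : γ ≤ 1) {k n : ℕ} (hkn : k ≤ n) :
    γ ^ ((1 : ℝ) / 2 ^ k) ≤ γ ^ ((1 : ℝ) / 2 ^ n) :=
  rpow_le_rpow_of_exponent_ge' h₀ h₁ (by positivity) <|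
    one_div_le_one_div_of_le (by positivity) (pow_le_pow_right₀ one_le_two hkn)

lemma sub_le_mul_of_forall_succ_sub_le {b : ℕ → ℝ} {c : ℝ} {m n : ℕ} (hmn : m ≤ n)
    (h : ∀ k ∈ Ico m n, b (k + 1) - b k ≤ c) : b n - b m ≤ (n - m : ℕ) * c := by
  rw [← sum_Ico_sub b hmn, ← Nat.card_Ico, ← nsmul_eq_mul]
  exact sum_le_card_nsmul _ _ _ h

section Dyadic

variable {G : ℝ → ℝ}

lemma AntitoneOn.sub_comp_two_mul_nonneg (hG : AntitoneOn G (Set.Ici 0)) {s : ℝ} (hs : 0 ≤ s) :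
    0 ≤ G s - G (2 * s) :=
  sub_nonneg.2 <| hG hs (Set.mem_Ici.2 (by linarith)) (by linarith)

lemma ConvexOn.sub_comp_four_mul_le (hG : ConvexOn ℝ (Set.Ici 0) G) {s : ℝ} (hs : 0 < s) :
    G (2 * s) - G (4 * s) ≤ 2 * (G s - G (2 * s)) := by
  have h := hG.slope_mono_adjacent (Set.mem_Ici.2 hs.le)
    (Set.mem_Ici.2 (by linarith : (0 : ℝ) ≤ 4 * s)) (by linarith : s < 2 * s)
    (by linarith : 2 * s < 4 * s)
  rw [show 2 * s - s = s by ring, show 4 * s - 2 * s = 2 * s by ring,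
    div_le_div_iff₀ hs (by linarith)] at h
  nlinarith

lemma sub_comp_two_mul_le_one (hconv : ConvexOn ℝ (Set.Ici 0) G)
    (hanti : AntitoneOn G (Set.Ici 0))
    (hCS : ∀ s : ℝ, 0 < s → G s - G (2 * s) ≤ √(G (2 * s) - G (4 * s))) {s : ℝ} (hs : 0 < s) :
    G s - G (2 * s) ≤ 1 := by
  have h4 : ∀ t : ℝ, 2 * (2 * t) = 4 * t := fun t => by ring
  have hsq : ∀ t, 0 < t → (G t - G (2 * t)) ^ 2 ≤ G (2 * t) - G (2 * (2 * t)) := fun t ht => by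
    have h := hanti.sub_comp_two_mul_nonneg (by positivity : 0 ≤ 2 * t)
    rw [h4] at h ⊢
    exact (le_sqrt (hanti.sub_comp_two_mul_nonneg ht.le) h).1 (hCS t ht)
  have hbdd : ∀ t, 0 < t → G t - G (2 * t) ≤ 2 := fun t ht => by
    nlinarith [h4 t ▸ hsq t ht, hconv.sub_comp_four_mul_le ht, hanti.sub_comp_two_mul_nonneg ht.le]
  exact le_one_of_sq_le_comp_two_mul (f := fun t => G t - G (2 * t)) hsq hbdd hs

lemma sub_inv_two_pow_le_sqrt
    (hCS : ∀ s : ℝ, 0 < s → G s - G (2 * s) ≤ √(G (2 * s) - G (4 * s))) (k : ℕ) :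
    G ((2 ^ (k + 2))⁻¹) - G ((2 ^ (k + 1))⁻¹)
      ≤ √(G ((2 ^ (k + 1))⁻¹) - G ((2 ^ k)⁻¹)) := by
  have h := hCS ((2 ^ (k + 2))⁻¹) (by positivity)
  rwa [show (2 : ℝ) * (2 ^ (k + 2))⁻¹ = (2 ^ (k + 1))⁻¹ by field_simp; ring,
    show (4 : ℝ) * (2 ^ (k + 2))⁻¹ = (2 ^ k)⁻¹ by field_simp; ring] at h

end Dyadic

theorem stmt18_general (G : ℝ → ℝ) (hGconv : ConvexOn ℝ (Set.Ici (0 : ℝ)) G)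
    (hGanti : AntitoneOn G (Set.Ici (0 : ℝ)))
    (γ : ℝ) (hγ : γ = G (1 / 2) - G 1)
    (hCS : ∀ s : ℝ, 0 < s → G s - G (2 * s) ≤ Real.sqrt (G (2 * s) - G (4 * s))) :
    ∀ r : ℕ, 2 ≤ r →
      G (((2 : ℝ) ^ r)⁻¹) - G (1 / 2) ≤ r * γ ^ ((1 : ℝ) / 2 ^ (r - 1)) := by
  intro r hr
  have hγ' : γ = G (1 / 2) - G (2 * (1 / 2)) := by norm_num [hγ]
  have hγ₀ : 0 ≤ γ := hγ' ▸ hGanti.sub_comp_two_mul_nonneg (by norm_num)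
  have hγ₁ : γ ≤ 1 := hγ' ▸ sub_comp_two_mul_le_one hGconv hGanti hCS (by norm_num)
  set b : ℕ → ℝ := fun k => G ((2 ^ k)⁻¹)
  have hstep : ∀ k, b (k + 1) - b k ≤ γ ^ ((1 : ℝ) / 2 ^ k) := by
    have ha₀ : b 1 - b 0 = γ := by norm_num [b, hγ]
    simpa only [ha₀] using le_rpow_one_div_two_pow_of_le_sqrt (a := fun k => b (k + 1) - b k)
      (ha₀ ▸ hγ₀) (sub_inv_two_pow_le_sqrt hCS)
  have hsum : b r - b 1 ≤ (r - 1 : ℕ) * γ ^ ((1 : ℝ) / 2 ^ (r - 1)) :=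
    sub_le_mul_of_forall_succ_sub_le (by omega) fun k hk =>
      (hstep k).trans (rpow_one_div_two_pow_le_of_le hγ₀ hγ₁ (by simp at hk; omega))
  calc G ((2 ^ r)⁻¹) - G (1 / 2) = b r - b 1 := by norm_num [b]
    _ ≤ (r - 1 : ℕ) * γ ^ ((1 : ℝ) / 2 ^ (r - 1)) := hsum
    _ ≤ r * γ ^ ((1 : ℝ) / 2 ^ (r - 1)) := by
      gcongr
      exact_mod_cast Nat.sub_le r 1

theorem stmt18 (G : ℝ → ℝ) (hGconv : ConvexOn ℝ (Set.Ici (0 : ℝ)) G)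
    (hGanti : AntitoneOn G (Set.Ici (0 : ℝ))) (hG0 : G 0 = 1)
    (γ : ℝ) (hγ : γ = G (1 / 2) - G 1) (hγpos : 0 < γ)
    (hCS : ∀ s : ℝ, 0 < s → G s - G (2 * s) ≤ Real.sqrt (G (2 * s) - G (4 * s))) :
    ∀ r : ℕ, 2 ≤ r →
      G (((2 : ℝ) ^ r)⁻¹) - G (1 / 2) ≤ r * γ ^ ((1 : ℝ) / 2 ^ (r - 1)) :=
  stmt18_general G hGconv hGanti γ hγ hCS
end
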